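/- For all f1, f2 ∈ (1/2, 1], the denominator 5 − 2·(f1+f2) + 8·f1·f2 is strictly positive and the distilled fidelity satisfies F_distill(f1, f2) ∈ (1/2, 1]; that is, BBPSSW distillation of two entangled isotropic states again yields a fidelity strictly above 1/2 and at most 1. -/
import Mathlib


/-- Output fidelity of the BBPSSW distillation protocol on two isotropic states
of fidelities `f1` and `f2`. -/
noncomputable def Fdistill (f1 f2 : ℝ) : ℝ :=
  (1 - (f1 + f2) + 10 * f1 * f2) / (5 - 2 * (f1 + f2) + 8 * f1 * f2)

theorem stmt_7 (f1 f2 : ℝ) (h1 : f1 ∈ Set.Ioc (1/2 : ℝ) 1) (h2 : f2 ∈ Set.Ioc (1/2 : ℝ) 1) :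
    0 < 5 - 2 * (f1 + f2) + 8 * f1 * f2 ∧ Fdistill f1 f2 ∈ Set.Ioc (1/2 : ℝ) 1 := by
  obtain ⟨a1, b1⟩ := h1
  obtain ⟨a2, b2⟩ := h2
  have hd : 0 < 5 - 2 * (f1 + f2) + 8 * f1 * f2 := by nlinarith
  refine ⟨hd, ?_, ?_⟩
  · rw [Fdistill, lt_div_iff₀ hd]
    nlinarith
  · rw [Fdistill, div_le_one hd]
    nlinarith
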